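/- arXiv:1501.03136 — 2 statements merged into one kernel-verified Lean document; each statement's English description precedes it below -/
import Mathlib

section
/- If (f_n) converges strictly in capacity μ to f, then (f_n) converges in mean with respect to the seminormed integral I_S, i.e., I_S(μ, |f_n − f|) := sup_{t ∈ [0,1]} S(t, μ({|f_n − f| ≥ t})) → 0 as n → ∞, for every semicopula S. -/
open Set Filter Topology

theorem stmt6 {X : Type*} [MeasurableSpace X] (μ : Set X → ℝ)
    (hμmono : ∀ A B : Set X, A ⊆ B → μ A ≤ μ B)
    (hμ0 : μ (∅ : Set X) = 0) (hμ1 : μ (Set.univ : Set X) = 1)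
    (hμmem : ∀ A : Set X, μ A ∈ Icc (0:ℝ) 1)
    (S : ℝ → ℝ → ℝ)
    (hSmem : ∀ x ∈ Icc (0:ℝ) 1, ∀ y ∈ Icc (0:ℝ) 1, S x y ∈ Icc (0:ℝ) 1)
    (hSmono1 : ∀ y ∈ Icc (0:ℝ) 1, MonotoneOn (fun x => S x y) (Icc (0:ℝ) 1))
    (hSmono2 : ∀ x ∈ Icc (0:ℝ) 1, MonotoneOn (fun y => S x y) (Icc (0:ℝ) 1))
    (hSneut : ∀ x ∈ Icc (0:ℝ) 1, S x 1 = x ∧ S 1 x = x)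
    (f : X → ℝ) (fn : ℕ → X → ℝ)
    (hf : Measurable f) (hfn : ∀ n, Measurable (fn n))
    (hfmem : ∀ x, f x ∈ Icc (0:ℝ) 1) (hfnmem : ∀ n x, fn n x ∈ Icc (0:ℝ) 1)
    (hstrict : Tendsto (fun n => μ {x | 0 < |fn n x - f x|}) atTop (𝓝 0)) :
    Tendsto (fun n => ⨆ t : Icc (0:ℝ) 1, S t.1 (μ {x | t.1 ≤ |fn n x - f x|}))
      atTop (𝓝 0) := by
  haveI : Nonempty (Icc (0:ℝ) 1) := ⟨⟨0, by norm_num⟩⟩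
  have h01 : (0:ℝ) ∈ Icc (0:ℝ) 1 := by norm_num
  have h11 : (1:ℝ) ∈ Icc (0:ℝ) 1 := by norm_num
  apply tendsto_of_tendsto_of_tendsto_of_le_of_le (g := fun _ => (0:ℝ))
    tendsto_const_nhds hstrict
  · intro n
    have hset : {x | (0:ℝ) ≤ |fn n x - f x|} = Set.univ := by
      ext x; simp [abs_nonneg]
    have h0 : S 0 (μ {x | (0:ℝ) ≤ |fn n x - f x|}) = 0 := by
      rw [hset, hμ1]; exact (hSneut 0 h01).1
    have hbdd : BddAbove (Set.range fun t : Icc (0:ℝ) 1 =>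
        S t.1 (μ {x | t.1 ≤ |fn n x - f x|})) := by
      refine ⟨1, ?_⟩
      rintro y ⟨t, rfl⟩
      exact (hSmem t.1 t.2 _ (hμmem _)).2
    calc (0:ℝ) = S 0 (μ {x | (0:ℝ) ≤ |fn n x - f x|}) := h0.symm
      _ ≤ _ := le_ciSup hbdd ⟨0, h01⟩
  · intro n
    set c := μ {x | 0 < |fn n x - f x|} with hc
    have hcmem := hμmem {x | 0 < |fn n x - f x|}
    apply ciSup_le
    intro t
    rcases eq_or_lt_of_le t.2.1 with h | h
    · have hset : {x | t.1 ≤ |fn n x - f x|} = Set.univ := by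
        ext x; simp [← h, abs_nonneg]
      rw [hset, hμ1]
      have : S t.1 1 = t.1 := (hSneut t.1 t.2).1
      rw [this, ← h]
      exact hcmem.1
    · have hsub : {x | t.1 ≤ |fn n x - f x|} ⊆ {x | 0 < |fn n x - f x|} :=
        fun x hx => lt_of_lt_of_le h hx
      have h1 : S t.1 (μ {x | t.1 ≤ |fn n x - f x|}) ≤ S t.1 c :=
        hSmono2 t.1 t.2 (hμmem _) hcmem (hμmono _ _ hsub)
      have h2 : S t.1 c ≤ S 1 c := hSmono1 c hcmem t.2 h11 t.2.2
      have h3 : S 1 c = c := (hSneut c hcmem).2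
      linarith
end

section
/- If the Sugeno integral of |f_n − f| tends to 0 (i.e., sup_{t∈[0,1]} min(t, μ({|f_n − f| ≥ t})) → 0), then (f_n) converges in capacity μ to f. -/
open Set Filter Topology

theorem stmt10 {X : Type*} [MeasurableSpace X] (μ : Set X → ℝ)
    (hμmono : ∀ A B : Set X, A ⊆ B → μ A ≤ μ B)
    (hμ0 : μ (∅ : Set X) = 0) (hμ1 : μ (Set.univ : Set X) = 1)
    (hμmem : ∀ A : Set X, μ A ∈ Icc (0:ℝ) 1)
    (f : X → ℝ) (fn : ℕ → X → ℝ)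
    (hf : Measurable f) (hfn : ∀ n, Measurable (fn n))
    (hfmem : ∀ x, f x ∈ Icc (0:ℝ) 1) (hfnmem : ∀ n x, fn n x ∈ Icc (0:ℝ) 1)
    (hmean : Tendsto (fun n => ⨆ t : Icc (0:ℝ) 1, min t.1 (μ {x | t.1 ≤ |fn n x - f x|}))
      atTop (𝓝 0)) :
    ∀ t ∈ Ioc (0:ℝ) 1, Tendsto (fun n => μ {x | t ≤ |fn n x - f x|}) atTop (𝓝 0) := by
  intro t ht
  rw [Metric.tendsto_atTop] at hmean ⊢
  intro ε hε
  obtain ⟨N, hN⟩ := hmean (min t ε) (lt_min ht.1 hε)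
  refine ⟨N, fun n hn => ?_⟩
  have h := hN n hn
  rw [Real.dist_eq, sub_zero] at h ⊢
  set S := ⨆ s : Icc (0:ℝ) 1, min s.1 (μ {x | s.1 ≤ |fn n x - f x|}) with hS
  have hbdd : BddAbove (Set.range fun s : Icc (0:ℝ) 1 =>
      min s.1 (μ {x | s.1 ≤ |fn n x - f x|})) := by
    refine ⟨1, ?_⟩
    rintro _ ⟨s, rfl⟩
    exact le_trans (min_le_left _ _) s.2.2
  have hle : min t (μ {x | t ≤ |fn n x - f x|}) ≤ S :=
    le_ciSup hbdd (⟨t, ht.1.le, ht.2⟩ : Icc (0:ℝ) 1)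
  have hSlt : S < min t ε := lt_of_abs_lt h
  have hμA := (hμmem {x | t ≤ |fn n x - f x|}).1
  have hmin : min t (μ {x | t ≤ |fn n x - f x|}) < t :=
    lt_of_le_of_lt hle (lt_of_lt_of_le hSlt (min_le_left _ _))
  have : μ {x | t ≤ |fn n x - f x|} < ε := by
    rcases min_cases t (μ {x | t ≤ |fn n x - f x|}) with ⟨h1, h2⟩ | ⟨h1, h2⟩
    · exact absurd hmin (by rw [h1]; exact lt_irrefl t)
    · calc μ {x | t ≤ |fn n x - f x|} = min t (μ {x | t ≤ |fn n x - f x|}) := h1.symm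
        _ ≤ S := hle
        _ < ε := lt_of_lt_of_le hSlt (min_le_right _ _)
  rwa [abs_of_nonneg hμA]
end
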